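/- Suppose H : 𝒫(ℝ^d) → [0,∞] is monotone, strongly subadditive, and countably subadditive. Let (f_n) be a sequence of real-valued quasicontinuous functions on ℝ^d with ∫|f_n| dH < ∞ for every n, which is Cauchy with respect to the Choquet integral, i.e. for every ε > 0 there exists N such that ∫|f_m − f_n| dH ≤ ε for all m, n ≥ N. Then there exists a real-valued quasicontinuous function f on ℝ^d with ∫|f| dH < ∞ such that lim_{n→∞} ∫|f_n − f| dH = 0 (i.e. the space L¹(H) of equivalence classes of quasicontinuous functions with finite Choquet integral, where f ∼ g whenever f = g outside a set of H-capacity zero, equipped with the norm ∫|f| dH, is a Banach space). -/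

import Mathlib

open MeasureTheory Filter Set Topology
open scoped ENNReal

/-- The Choquet integral `∫ f dH = ∫₀^∞ H({f > t}) dt` of `f : α → [0,∞]`
with respect to a set function `H`. -/
noncomputable def choquet {α : Type*} (H : Set α → ℝ≥0∞) (f : α → ℝ≥0∞) : ℝ≥0∞ :=
  ∫⁻ t in Set.Ioi (0 : ℝ), H {x | ENNReal.ofReal t < f x}

/-- A set function is monotone if `E ⊆ F` implies `H E ≤ H F`. -/
def MonotoneSF {α : Type*} (H : Set α → ℝ≥0∞) : Prop :=
  ∀ ⦃E F : Set α⦄, E ⊆ F → H E ≤ H F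

/-- Strong subadditivity: `H(E ∩ F) + H(E ∪ F) ≤ H(E) + H(F)`. -/
def StronglySubadditive {α : Type*} (H : Set α → ℝ≥0∞) : Prop :=
  ∀ E F : Set α, H (E ∩ F) + H (E ∪ F) ≤ H E + H F

def FinitelySubadditive {α : Type*} (H : Set α → ℝ≥0∞) : Prop :=
  ∀ E F : Set α, H (E ∪ F) ≤ H E + H F

def CountablySubadditive {α : Type*} (H : Set α → ℝ≥0∞) : Prop :=
  ∀ E : ℕ → Set α, H (⋃ n, E n) ≤ ∑' n, H (E n)

/-- Quasi-uniform convergence of a sequence of real-valued functions: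
for every `ε > 0` there is a set `E` with `H E ≤ ε` such that the sequence
converges uniformly on the complement of `E`. -/
def QUTendsto {α : Type*} (H : Set α → ℝ≥0∞) (f : ℕ → α → ℝ) (g : α → ℝ) : Prop :=
  ∀ ε : ℝ, 0 < ε → ∃ E : Set α, H E ≤ ENNReal.ofReal ε ∧
    TendstoUniformlyOn f g Filter.atTop Eᶜ

/-- Quasi-uniform convergence of a sequence of `[0,∞]`-valued functions: for every
`ε > 0` there is a set `E` with `H E ≤ ε` such that the functions are finite on the
complement of `E` and converge uniformly to `g` there. -/
def QUTendstoENN {α : Type*} (H : Set α → ℝ≥0∞) (f : ℕ → α → ℝ≥0∞) (g : α → ℝ≥0∞) : Prop :=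
  ∀ ε : ℝ, 0 < ε → ∃ E : Set α, H E ≤ ENNReal.ofReal ε ∧
    (∀ n, ∀ x ∉ E, f n x ≠ ⊤) ∧ (∀ x ∉ E, g x ≠ ⊤) ∧
    TendstoUniformlyOn (fun n x => (f n x).toReal) (fun x => (g x).toReal) Filter.atTop Eᶜ

/-- A function `f : α → [-∞,∞]` is quasicontinuous with respect to `H` if for every
`ε > 0` there is an open set `ω` with `H ω ≤ ε` such that `f` is finite and continuous
on the complement of `ω`. -/
def QuasicontinuousE {α : Type*} [TopologicalSpace α] (H : Set α → ℝ≥0∞) (f : α → EReal) : Prop :=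
  ∀ ε : ℝ, 0 < ε → ∃ ω : Set α, IsOpen ω ∧ H ω ≤ ENNReal.ofReal ε ∧
    (∀ x ∉ ω, f x ≠ ⊤ ∧ f x ≠ ⊥) ∧ ContinuousOn f ωᶜ

/-- Quasicontinuity of a real-valued function. -/
def QuasicontinuousR {α : Type*} [TopologicalSpace α] (H : Set α → ℝ≥0∞) (f : α → ℝ) : Prop :=
  ∀ ε : ℝ, 0 < ε → ∃ ω : Set α, IsOpen ω ∧ H ω ≤ ENNReal.ofReal ε ∧ ContinuousOn f ωᶜ

/-- Quasicontinuity of a `[0,∞]`-valued function: finite and continuous off an open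
set of small capacity. -/
def QuasicontinuousENN {α : Type*} [TopologicalSpace α] (H : Set α → ℝ≥0∞) (f : α → ℝ≥0∞) :
    Prop :=
  ∀ ε : ℝ, 0 < ε → ∃ ω : Set α, IsOpen ω ∧ H ω ≤ ENNReal.ofReal ε ∧
    (∀ x ∉ ω, f x ≠ ⊤) ∧ ContinuousOn f ωᶜ

/-- Evanescence: for every open `U` with `H U < ∞` and every closed `F ⊆ U`,
`H(F \ B_r) → 0` as `r → ∞`. -/
def Evanescent {d : ℕ} (H : Set (EuclideanSpace ℝ (Fin d)) → ℝ≥0∞) : Prop :=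
  ∀ U : Set (EuclideanSpace ℝ (Fin d)), IsOpen U → H U < ⊤ →
    ∀ F : Set (EuclideanSpace ℝ (Fin d)), IsClosed F → F ⊆ U →
      Filter.Tendsto (fun r : ℝ => H (F \ Metric.ball 0 r)) Filter.atTop (nhds 0)

/-- Semifiniteness: every open set of infinite capacity contains subsets of
arbitrarily large finite capacity. -/
def SemifiniteSF {α : Type*} [TopologicalSpace α] (H : Set α → ℝ≥0∞) : Prop :=
  ∀ U : Set α, IsOpen U → H U = ⊤ → ∀ M : ℝ, 0 ≤ M →
    ∃ E ⊆ U, ENNReal.ofReal M ≤ H E ∧ H E < ⊤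

/-- The regularization `H̃(A) = sup { H(D) : D ⊆ A, H(D) < ∞ }`. -/
noncomputable def tildeSF {α : Type*} (H : Set α → ℝ≥0∞) (A : Set α) : ℝ≥0∞ :=
  ⨆ (D : Set α) (_ : D ⊆ A) (_ : H D < ⊤), H D

/-!
Pass to a subsequence `u k = f (φ k)` with `∑ 2 ^ k ∫ |u (k + 1) - u k| dH < ∞` and let `g` be its
pointwise limit. If `F ≤ ∑ G j` then `{F > t} ⊆ ⋃ j, {G j > t / 2 ^ (j + 1)}`, so countable
subadditivity gives `∫ F dH ≤ ∑ 2 ^ (j + 1) ∫ G j dH`; applied to the telescoping bound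
`|u m - g| ≤ ∑_{j ≥ m} |u (j + 1) - u j|` this yields `∫ |u m - g| dH → 0`, and the Cauchy property
passes the convergence on to the whole sequence. By Chebyshev the sets `{|u (k + 1) - u k| > 2⁻ᵏ}`
have summable capacities; off a tail of them and off a small open set on which every `u k` is
continuous, `u k → g` uniformly, so `g` is quasicontinuous.
-/

theorem ofReal_abs_sub_eq_edist (a b : ℝ) : ENNReal.ofReal |a - b| = edist a b := by
  rw [edist_dist, Real.dist_eq]

theorem setLIntegral_Ioi_comp_div {G : ℝ → ℝ≥0∞} (hG : Measurable G) {c : ℝ} (hc : 0 < c) :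
    ∫⁻ t in Ioi 0, G (t / c) = ENNReal.ofReal c * ∫⁻ t in Ioi 0, G t := by
  have hpre : (· * c⁻¹) ⁻¹' Ioi (0 : ℝ) = Ioi 0 := by
    ext t
    simp [mul_pos_iff_of_pos_right (inv_pos.2 hc)]
  have hmap :=
    setLIntegral_map (μ := volume) (s := Ioi 0) measurableSet_Ioi hG (measurable_mul_const c⁻¹)
  rw [Real.map_volume_mul_right (inv_ne_zero hc.ne'), hpre, Measure.restrict_smul,
    lintegral_smul_measure, inv_inv, abs_of_pos hc, smul_eq_mul] at hmap
  simpa only [div_eq_mul_inv] using hmap.symm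

section Choquet

variable {α : Type*} {H : Set α → ℝ≥0∞}

theorem StronglySubadditive.finitelySubadditive (hssa : StronglySubadditive H) :
    FinitelySubadditive H :=
  fun E F => le_add_self.trans (hssa E F)

theorem MonotoneSF.antitone_superlevel (hmono : MonotoneSF H) (F : α → ℝ≥0∞) :
    Antitone fun t : ℝ => H {x | ENNReal.ofReal t < F x} :=
  fun _ _ hst => hmono fun _ hx => (ENNReal.ofReal_le_ofReal hst).trans_lt hx

theorem MonotoneSF.measurable_superlevel_div (hmono : MonotoneSF H) (F : α → ℝ≥0∞) (c : ℝ) :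
    Measurable fun t : ℝ => H {x | ENNReal.ofReal (t / c) < F x} :=
  (hmono.antitone_superlevel F).measurable.comp (measurable_div_const c)

theorem MonotoneSF.lintegral_superlevel_div (hmono : MonotoneSF H) (F : α → ℝ≥0∞) {c : ℝ}
    (hc : 0 < c) :
    ∫⁻ t in Ioi 0, H {x | ENNReal.ofReal (t / c) < F x} = ENNReal.ofReal c * choquet H F :=
  setLIntegral_Ioi_comp_div (hmono.antitone_superlevel F).measurable hc

theorem MonotoneSF.superlevel_le_inv_mul_choquet (hmono : MonotoneSF H) (F : α → ℝ≥0∞) {s : ℝ}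
    (hs : 0 < s) :
    H {x | ENNReal.ofReal s < F x} ≤ ENNReal.ofReal s⁻¹ * choquet H F := by
  have hmul : ENNReal.ofReal s * H {x | ENNReal.ofReal s < F x} ≤ choquet H F :=
    calc ENNReal.ofReal s * H {x | ENNReal.ofReal s < F x}
        = ∫⁻ _ in Ioc 0 s, H {x | ENNReal.ofReal s < F x} := by
          rw [setLIntegral_const, Real.volume_Ioc, sub_zero, mul_comm]
      _ ≤ ∫⁻ t in Ioc 0 s, H {x | ENNReal.ofReal t < F x} :=
          setLIntegral_mono' measurableSet_Ioc fun _ ht => hmono.antitone_superlevel F ht.2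
      _ ≤ choquet H F := lintegral_mono_set Ioc_subset_Ioi_self
  calc H {x | ENNReal.ofReal s < F x}
      = ENNReal.ofReal s⁻¹ * (ENNReal.ofReal s * H {x | ENNReal.ofReal s < F x}) := by
        rw [← mul_assoc, ← ENNReal.ofReal_mul (inv_nonneg.2 hs.le), inv_mul_cancel₀ hs.ne',
          ENNReal.ofReal_one, one_mul]
    _ ≤ ENNReal.ofReal s⁻¹ * choquet H F := by gcongr

theorem MonotoneSF.choquet_le_of_le_add (hmono : MonotoneSF H) (hsub : FinitelySubadditive H)
    {F F₁ F₂ : α → ℝ≥0∞} (h : ∀ x, F x ≤ F₁ x + F₂ x) :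
    choquet H F ≤ 2 * choquet H F₁ + 2 * choquet H F₂ := by
  have hlevel : ∀ t : ℝ, 0 < t → {x | ENNReal.ofReal t < F x} ⊆
      {x | ENNReal.ofReal (t / 2) < F₁ x} ∪ {x | ENNReal.ofReal (t / 2) < F₂ x} := by
    intro t ht x hx
    by_contra hx'
    simp only [mem_union, mem_ofPred_eq, not_or, not_lt] at hx'
    refine hx.not_ge ((h x).trans ?_)
    calc F₁ x + F₂ x ≤ ENNReal.ofReal (t / 2) + ENNReal.ofReal (t / 2) := add_le_add hx'.1 hx'.2
      _ = ENNReal.ofReal t := by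
        rw [← ENNReal.ofReal_add (by positivity) (by positivity), add_halves]
  calc choquet H F
      ≤ ∫⁻ t in Ioi 0, (H {x | ENNReal.ofReal (t / 2) < F₁ x} +
          H {x | ENNReal.ofReal (t / 2) < F₂ x}) :=
        setLIntegral_mono' measurableSet_Ioi fun t ht => (hmono (hlevel t ht)).trans (hsub _ _)
    _ = 2 * choquet H F₁ + 2 * choquet H F₂ := by
        rw [lintegral_add_left (hmono.measurable_superlevel_div F₁ 2),
          hmono.lintegral_superlevel_div F₁ two_pos,
          hmono.lintegral_superlevel_div F₂ two_pos, ENNReal.ofReal_ofNat]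

theorem MonotoneSF.choquet_le_of_le_tsum (hmono : MonotoneSF H) (hcount : CountablySubadditive H)
    {F : α → ℝ≥0∞} {G : ℕ → α → ℝ≥0∞} (h : ∀ x, F x ≤ ∑' j, G j x) :
    choquet H F ≤ ∑' j, 2 ^ (j + 1) * choquet H (G j) := by
  have hlevel : ∀ t : ℝ, 0 < t → {x | ENNReal.ofReal t < F x} ⊆
      ⋃ j, {x | ENNReal.ofReal (t / 2 ^ (j + 1)) < G j x} := by
    intro t ht x hx
    by_contra hx'
    simp only [mem_iUnion, mem_ofPred_eq, not_exists, not_lt] at hx'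
    refine hx.not_ge ((h x).trans ?_)
    calc ∑' j, G j x ≤ ∑' j, ENNReal.ofReal (t / 2 ^ (j + 1)) := ENNReal.tsum_le_tsum hx'
      _ = ENNReal.ofReal t := by
        simp_rw [pow_succ', ← div_div]
        rw [← ENNReal.ofReal_tsum_of_nonneg (fun j => by positivity) (summable_geometric_two' t),
          tsum_geometric_two']
  calc choquet H F
      ≤ ∫⁻ t in Ioi 0, ∑' j, H {x | ENNReal.ofReal (t / 2 ^ (j + 1)) < G j x} :=
        setLIntegral_mono' measurableSet_Ioi fun t ht => (hmono (hlevel t ht)).trans (hcount _)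
    _ = ∑' j, 2 ^ (j + 1) * choquet H (G j) := by
        rw [lintegral_tsum fun j => (hmono.measurable_superlevel_div (G j) _).aemeasurable]
        refine tsum_congr fun j => ?_
        rw [hmono.lintegral_superlevel_div (G j) (by positivity), ENNReal.ofReal_pow zero_le_two,
          ENNReal.ofReal_ofNat]

end Choquet

theorem edist_limUnder_le_tsum {E : Type*} [PseudoEMetricSpace E] [CompleteSpace E] [Nonempty E]
    (a : ℕ → E) (m : ℕ) :
    edist (a m) (limUnder atTop a) ≤ ∑' j, edist (a (j + m)) (a (j + m + 1)) := by
  set b : ℕ → E := fun j => a (j + m)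
  have hlim : limUnder atTop b = limUnder atTop a := by
    rw [limUnder, limUnder, show b = a ∘ (· + m) from rfl, ← map_map, map_add_atTop_eq_nat]
  -- `limUnder` is junk when the series diverges, but then the bound is `⊤`.
  by_cases hd : ∑' j, edist (a (j + m)) (a (j + m + 1)) = ⊤
  · simp [hd]
  have hstep : ∀ j, edist (b j) (b (j + 1)) ≤ edist (a (j + m)) (a (j + m + 1)) := fun j => by
    simp only [b, add_right_comm, le_rfl]
  have hb := (cauchySeq_of_edist_le_of_tsum_ne_top _ hstep hd).tendsto_limUnder
  simpa [b, hlim] using edist_le_tsum_of_edist_le_of_tendsto₀ _ hstep hb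

theorem tendstoUniformlyOn_limUnder_of_edist_le {α E : Type*} [PseudoEMetricSpace E]
    [CompleteSpace E] [Nonempty E] {u : ℕ → α → E} {s : Set α} {r : ℕ → ℝ≥0∞}
    (hr : ∑' k, r k ≠ ⊤) {K : ℕ} (h : ∀ x ∈ s, ∀ k ≥ K, edist (u k x) (u (k + 1) x) ≤ r k) :
    TendstoUniformlyOn u (fun x => limUnder atTop (u · x)) atTop s := by
  rw [EMetric.tendstoUniformlyOn_iff]
  intro ε hε
  filter_upwards [(ENNReal.tendsto_sum_nat_add r hr).eventually (gt_mem_nhds hε),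
    eventually_ge_atTop K] with k hk hKk x hx
  rw [edist_comm]
  calc edist (u k x) (limUnder atTop (u · x))
      ≤ ∑' j, edist (u (j + k) x) (u (j + k + 1) x) := edist_limUnder_le_tsum (u · x) k
    _ ≤ ∑' j, r (j + k) := ENNReal.tsum_le_tsum fun j => h x hx _ (le_add_left hKk)
    _ < ε := hk

theorem ContinuousOn.isOpen_union_preimage {α β : Type*} [TopologicalSpace α]
    [TopologicalSpace β] {W : Set α} {v : α → β} {O : Set β} (hv : ContinuousOn v Wᶜ)
    (hW : IsOpen W) (hO : IsOpen O) : IsOpen (W ∪ v ⁻¹' O) := by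
  rw [← isClosed_compl_iff, compl_union, ← preimage_compl]
  exact hv.preimage_isClosed_of_isClosed hW.isClosed_compl hO.isClosed_compl

theorem tendsto_atTop_zero_of_forall_ofReal_le {D : ℕ → ℕ → ℝ≥0∞}
    (h : ∀ ε : ℝ, 0 < ε → ∃ N : ℕ, ∀ m ≥ N, ∀ n ≥ N, D m n ≤ ENNReal.ofReal ε) :
    Tendsto (Function.uncurry D) atTop (𝓝 0) := by
  refine ENNReal.tendsto_nhds_zero.2 fun ε hε => ?_
  obtain ⟨r, -, hr, hrε⟩ := ENNReal.lt_iff_exists_real_btwn.1 hε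
  obtain ⟨N, hN⟩ := h r (ENNReal.ofReal_pos.1 hr)
  exact eventually_atTop_prod_self'.2 ⟨N, fun m hm n hn => (hN m hm n hn).trans hrε.le⟩

theorem exists_strictMono_le_of_tendsto_zero {D : ℕ → ℕ → ℝ≥0∞}
    (hD : Tendsto (Function.uncurry D) atTop (𝓝 0)) {ε : ℕ → ℝ≥0∞}
    (hε : ∀ k, 0 < ε k) : ∃ φ : ℕ → ℕ, StrictMono φ ∧ ∀ k, D (φ k) (φ (k + 1)) ≤ ε k := by
  have hev : ∀ k, ∀ᶠ m in atTop, ∀ n ≥ m, D m n ≤ ε k := fun k => by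
    obtain ⟨N, hN⟩ := eventually_atTop_prod_self'.1 (ENNReal.tendsto_nhds_zero.1 hD _ (hε k))
    exact eventually_atTop.2 ⟨N, fun m hm n hn => hN m hm n (hm.trans hn)⟩
  obtain ⟨φ, hφ, hφD⟩ := extraction_forall_of_eventually hev
  exact ⟨φ, hφ, fun k => hφD k _ (hφ k.lt_succ_self).le⟩

section Quasicontinuity

variable {α : Type*} [TopologicalSpace α] {H : Set α → ℝ≥0∞}

theorem exists_isOpen_forall_continuousOn_compl (hcount : CountablySubadditive H)
    {u : ℕ → α → ℝ} (hqc : ∀ k, QuasicontinuousR H (u k)) {ε : ℝ} (hε : 0 < ε) :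
    ∃ W, IsOpen W ∧ H W ≤ ENNReal.ofReal ε ∧ ∀ k, ContinuousOn (u k) Wᶜ := by
  obtain ⟨δ, hδ, hδsum⟩ := ENNReal.exists_pos_sum_of_countable (ENNReal.ofReal_pos.2 hε).ne' ℕ
  choose ω hωo hωH hωc using fun k => hqc k (δ k) (hδ k)
  refine ⟨⋃ k, ω k, isOpen_iUnion hωo, ?_,
    fun k => (hωc k).mono (compl_subset_compl.2 (subset_iUnion ω k))⟩
  calc H (⋃ k, ω k) ≤ ∑' k, H (ω k) := hcount ω
    _ ≤ ∑' k, (δ k : ℝ≥0∞) :=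
        ENNReal.tsum_le_tsum fun k => (hωH k).trans_eq ENNReal.ofReal_coe_nnreal
    _ ≤ ENNReal.ofReal ε := hδsum.le

theorem quasicontinuousR_limUnder (hmono : MonotoneSF H) (hsub : FinitelySubadditive H)
    (hcount : CountablySubadditive H) {u : ℕ → α → ℝ} (hqc : ∀ k, QuasicontinuousR H (u k))
    (hu : ∑' k, 2 ^ k * choquet H (fun x => edist (u k x) (u (k + 1) x)) ≠ ⊤) :
    QuasicontinuousR H fun x => limUnder atTop (u · x) := by
  intro ε hε
  obtain ⟨W, hWo, hWH, hWc⟩ := exists_isOpen_forall_continuousOn_compl hcount hqc (half_pos hε)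
  set S : ℕ → Set α := fun k => {x | ENNReal.ofReal (2⁻¹ ^ k) < edist (u k x) (u (k + 1) x)}
  have hSH : ∀ k, H (S k) ≤ 2 ^ k * choquet H (fun x => edist (u k x) (u (k + 1) x)) := by
    intro k
    refine (hmono.superlevel_le_inv_mul_choquet _ (by positivity)).trans_eq ?_
    rw [← inv_pow, inv_inv, ENNReal.ofReal_pow zero_le_two, ENNReal.ofReal_ofNat]
  obtain ⟨K, hK⟩ : ∃ K, ∑' j, H (S (j + K)) < ENNReal.ofReal (ε / 2) :=
    ((ENNReal.tendsto_sum_nat_add _ (ne_top_of_le_ne_top hu (ENNReal.tsum_le_tsum hSH))).eventually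
      (gt_mem_nhds (ENNReal.ofReal_pos.2 (half_pos hε)))).exists
  refine ⟨W ∪ ⋃ j, S (j + K), ?_, ?_, ?_⟩
  · rw [union_iUnion]
    exact isOpen_iUnion fun j =>
      (continuous_edist.comp_continuousOn ((hWc _).prodMk (hWc _))).isOpen_union_preimage hWo
        isOpen_Ioi
  · calc H (W ∪ ⋃ j, S (j + K)) ≤ H W + ∑' j, H (S (j + K)) :=
          (hsub _ _).trans (by gcongr; exact hcount _)
      _ ≤ ENNReal.ofReal (ε / 2) + ENNReal.ofReal (ε / 2) := add_le_add hWH hK.le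
      _ = ENNReal.ofReal ε := by
          rw [← ENNReal.ofReal_add (by positivity) (by positivity), add_halves]
  · have hgeom : ∑' k, ENNReal.ofReal (2⁻¹ ^ k) ≠ ⊤ := by
      rw [← ENNReal.ofReal_tsum_of_nonneg (fun k => by positivity)
        (summable_geometric_of_lt_one (by norm_num) (by norm_num))]
      exact ENNReal.ofReal_ne_top
    have hsmall : ∀ x ∈ (W ∪ ⋃ j, S (j + K))ᶜ, ∀ k ≥ K,
        edist (u k x) (u (k + 1) x) ≤ ENNReal.ofReal (2⁻¹ ^ k) := by
      intro x hx k hk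
      have hxS : x ∉ S (k - K + K) := fun hxS => hx (Or.inr (mem_iUnion.2 ⟨k - K, hxS⟩))
      simpa [S, Nat.sub_add_cancel hk] using hxS
    exact (tendstoUniformlyOn_limUnder_of_edist_le hgeom hsmall).continuousOn
      (Frequently.of_forall fun k => (hWc k).mono (compl_subset_compl.2 subset_union_left))

end Quasicontinuity

section Convergence

variable {α : Type*} {H : Set α → ℝ≥0∞}

theorem MonotoneSF.tendsto_choquet_edist_limUnder {E : Type*} [PseudoEMetricSpace E]
    [CompleteSpace E] [Nonempty E] (hmono : MonotoneSF H) (hcount : CountablySubadditive H)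
    {u : ℕ → α → E}
    (hu : ∑' k, 2 ^ k * choquet H (fun x => edist (u k x) (u (k + 1) x)) ≠ ⊤) :
    Tendsto (fun m => choquet H fun x => edist (u m x) (limUnder atTop (u · x))) atTop (𝓝 0) := by
  set D : ℕ → ℝ≥0∞ := fun k => choquet H (fun x => edist (u k x) (u (k + 1) x))
  have hbound : ∀ m, choquet H (fun x => edist (u m x) (limUnder atTop (u · x))) ≤
      2 * ∑' j, 2 ^ (j + m) * D (j + m) := fun m =>
    calc choquet H (fun x => edist (u m x) (limUnder atTop (u · x)))
        ≤ ∑' j, 2 ^ (j + 1) * D (j + m) :=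
          hmono.choquet_le_of_le_tsum hcount fun x => edist_limUnder_le_tsum (u · x) m
      _ ≤ ∑' j, 2 * (2 ^ (j + m) * D (j + m)) := ENNReal.tsum_le_tsum fun j => by
          rw [← mul_assoc, ← pow_succ']
          gcongr
          · norm_num
          · omega
      _ = 2 * ∑' j, 2 ^ (j + m) * D (j + m) := ENNReal.tsum_mul_left
  have htail := ENNReal.Tendsto.const_mul (ENNReal.tendsto_sum_nat_add _ hu)
    (Or.inr (ENNReal.ofNat_ne_top (n := 2)))
  rw [mul_zero] at htail
  exact tendsto_of_tendsto_of_tendsto_of_le_of_le tendsto_const_nhds htail (fun _ => zero_le)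
    hbound

theorem MonotoneSF.tendsto_choquet_edist_of_subseq {E : Type*} [PseudoEMetricSpace E]
    (hmono : MonotoneSF H) (hsub : FinitelySubadditive H) {f : ℕ → α → E} {g : α → E}
    (hf : Tendsto (fun p : ℕ × ℕ => choquet H fun x => edist (f p.1 x) (f p.2 x)) atTop (𝓝 0))
    {φ : ℕ → ℕ} (hφ : Tendsto φ atTop atTop)
    (hg : Tendsto (fun k => choquet H fun x => edist (f (φ k) x) (g x)) atTop (𝓝 0)) :
    Tendsto (fun n => choquet H fun x => edist (f n x) (g x)) atTop (𝓝 0) := by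
  have hpair : Tendsto (fun n => choquet H fun x => edist (f n x) (f (φ n) x)) atTop (𝓝 0) :=
    hf.comp (prod_atTop_atTop_eq (α := ℕ) (β := ℕ) ▸ tendsto_id.prodMk hφ)
  have hbound := (ENNReal.Tendsto.const_mul hpair (Or.inr (ENNReal.ofNat_ne_top (n := 2)))).add
    (ENNReal.Tendsto.const_mul hg (Or.inr (ENNReal.ofNat_ne_top (n := 2))))
  rw [mul_zero, add_zero] at hbound
  exact tendsto_of_tendsto_of_tendsto_of_le_of_le tendsto_const_nhds hbound (fun _ => zero_le)
    fun n => hmono.choquet_le_of_le_add hsub fun x => edist_triangle _ _ _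

end Convergence

/-- Completeness of `L¹(H)`: every Cauchy sequence (for the Choquet
integral) of quasicontinuous functions with finite Choquet integral converges, with
respect to the Choquet integral, to a quasicontinuous function with finite Choquet
integral. -/
theorem L1H_complete {d : ℕ}
    (H : Set (EuclideanSpace ℝ (Fin d)) → ℝ≥0∞)
    (hmono : MonotoneSF H) (hssa : StronglySubadditive H)
    (hcount : CountablySubadditive H)
    (f : ℕ → EuclideanSpace ℝ (Fin d) → ℝ) (hqc : ∀ n, QuasicontinuousR H (f n))
    (hfin : ∀ n, choquet H (fun x => ENNReal.ofReal |f n x|) < ⊤)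
    (hcauchy : ∀ ε : ℝ, 0 < ε → ∃ N : ℕ, ∀ m ≥ N, ∀ n ≥ N,
      choquet H (fun x => ENNReal.ofReal |f m x - f n x|) ≤ ENNReal.ofReal ε) :
    ∃ g : EuclideanSpace ℝ (Fin d) → ℝ, QuasicontinuousR H g ∧
      choquet H (fun x => ENNReal.ofReal |g x|) < ⊤ ∧
      Filter.Tendsto (fun n => choquet H (fun x => ENNReal.ofReal |f n x - g x|))
        Filter.atTop (nhds 0) := by
  simp only [ofReal_abs_sub_eq_edist] at hcauchy ⊢
  have hsub := hssa.finitelySubadditive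
  have hC := tendsto_atTop_zero_of_forall_ofReal_le hcauchy
  obtain ⟨δ, hδ, hδsum⟩ := ENNReal.exists_pos_tsum_mul_lt_of_countable one_ne_zero
    (fun k => (2 : ℝ≥0∞) ^ k) fun k => ENNReal.pow_ne_top ENNReal.ofNat_ne_top
  obtain ⟨φ, hφ, hfast⟩ := exists_strictMono_le_of_tendsto_zero hC
    fun k => ENNReal.coe_pos.2 (hδ k)
  have hsum : ∑' k, 2 ^ k * choquet H (fun x => edist (f (φ k) x) (f (φ (k + 1)) x)) ≠ ⊤ :=
    ne_top_of_le_ne_top (hδsum.trans ENNReal.one_lt_top).ne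
      (ENNReal.tsum_le_tsum fun k => by gcongr; exact hfast k)
  set g := fun x => limUnder atTop fun k => f (φ k) x
  have hlim : Tendsto (fun k => choquet H fun x => edist (f (φ k) x) (g x)) atTop (𝓝 0) :=
    hmono.tendsto_choquet_edist_limUnder hcount hsum
  obtain ⟨k, hk⟩ := (hlim.eventually (gt_mem_nhds ENNReal.zero_lt_top)).exists
  have hg_le (x) : ENNReal.ofReal |g x| ≤ ENNReal.ofReal |f (φ k) x| + edist (f (φ k) x) (g x) := by
    simpa only [edist_zero_right, Real.enorm_eq_ofReal_abs, add_comm] using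
      edist_triangle_left (g x) 0 (f (φ k) x)
  refine ⟨g, quasicontinuousR_limUnder hmono hsub hcount (fun k => hqc (φ k)) hsum, ?_,
    hmono.tendsto_choquet_edist_of_subseq hsub hC hφ.tendsto_atTop hlim⟩
  have hfin_k := hfin (φ k)
  exact (hmono.choquet_le_of_le_add hsub hg_le).trans_lt (by finiteness)
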